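/- (Laplacian identity for the regularized cone potential, flat local version of equation (5).) Let β ∈ (0,1] and ε > 0, and define u : ℝ² → ℝ by u(x, y) := χ_{β,ε}(x² + y²). Then u is twice continuously differentiable on ℝ², and at every point (x, y) ∈ ℝ² its Laplacian satisfies ∂²u/∂x² + ∂²u/∂y² = 4 (ε² + x² + y²)^{β−1}. -/

import Mathlib

/-!
Let `g` be the integrand of `χ = χ_{β,ε}`, continued across `r = 0` as the divided difference of
`f r = (ε² + r)^β` at `0`. It is analytic on `(-ε², ∞)`, so `χ' = g / β` is `C¹` there, and
`r g(r) = f r - f 0` gives `g + r g' = f' = β (ε² + r)^{β-1}`. For a radial function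
`u = χ(x² + y²)` one computes `Δu = 4 (χ'(t) + t χ''(t))` at `t = x² + y²`, which is
`(4 / β) (g + t g')(t) = 4 (ε² + t)^{β-1}`.
-/

open MeasureTheory Real Set

noncomputable section

def chiReg (β ε t : ℝ) : ℝ :=
  (1 / β) * ∫ r in (0 : ℝ)..t, ((ε ^ 2 + r) ^ β - ε ^ (2 * β)) / r

def chiRad (β ε : ℝ) : ℝ × ℝ → ℝ := fun p => chiReg β ε (p.1 ^ 2 + p.2 ^ 2)

theorem AnalyticAt.rpow_const {E : Type*} [NormedAddCommGroup E] [NormedSpace ℝ E]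
    {f : E → ℝ} {x : E} (hf : AnalyticAt ℝ f x) (hpos : 0 < f x) (p : ℝ) :
    AnalyticAt ℝ (fun z => f z ^ p) x := by
  have hexp : AnalyticAt ℝ (exp ∘ fun z => Real.log (f z) * p) x :=
    (((analyticAt_log hpos).comp hf).mul analyticAt_const).rexp
  refine hexp.congr ?_
  filter_upwards [continuousAt_const.eventually_lt hf.continuousAt hpos] with z hz
  exact (rpow_def_of_pos hz p).symm

theorem AnalyticAt.dslope {𝕜 E : Type*} [NontriviallyNormedField 𝕜] [NormedAddCommGroup E]
    [NormedSpace 𝕜 E] {f : 𝕜 → E} {a b : 𝕜} (ha : AnalyticAt 𝕜 f a) (hb : AnalyticAt 𝕜 f b) :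
    AnalyticAt 𝕜 (dslope f a) b := by
  rcases eq_or_ne b a with rfl | hne
  · obtain ⟨p, hp⟩ := ha
    exact ⟨_, hp.has_fpower_series_dslope_fslope⟩
  · have hslope : AnalyticAt 𝕜 (fun r => (r - a)⁻¹ • (f r - f a)) b :=
      ((analyticAt_id.sub analyticAt_const).inv (sub_ne_zero.2 hne)).smul
        (hb.sub analyticAt_const)
    exact hslope.congr (dslope_eventuallyEq_slope_of_ne f hne).symm

theorem hasDerivAt_sub_smul_dslope {𝕜 E : Type*} [NontriviallyNormedField 𝕜]
    [NormedAddCommGroup E] [NormedSpace 𝕜 E] {f : 𝕜 → E} {f' : E} {a b : 𝕜}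
    (hf : HasDerivAt f f' b) : HasDerivAt (fun r => (r - a) • dslope f a r) f' b := by
  simpa only [sub_smul_dslope] using hf.sub_const (f a)

theorem ContinuousOn.hasDerivAt_intervalIntegral {E : Type*} [NormedAddCommGroup E]
    [NormedSpace ℝ E] [CompleteSpace E] {g : ℝ → E} {s : Set ℝ} {a t : ℝ}
    (hg : ContinuousOn g s) (hs : IsOpen s) [s.OrdConnected] (ha : a ∈ s) (ht : t ∈ s) :
    HasDerivAt (fun u => ∫ r in a..u, g r) (g t) t :=
  intervalIntegral.integral_hasDerivAt_right
    ((hg.mono (‹s.OrdConnected›.uIcc_subset ha ht)).intervalIntegrable)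
    (hg.stronglyMeasurableAtFilter hs t ht) (hg.continuousAt (hs.mem_nhds ht))

section Radial

variable {χ χ' : ℝ → ℝ}

theorem hasFDerivAt_sq_add_sq (q : ℝ × ℝ) :
    HasFDerivAt (fun p : ℝ × ℝ => p.1 ^ 2 + p.2 ^ 2)
      ((2 * q.1) • ContinuousLinearMap.fst ℝ ℝ ℝ + (2 * q.2) • ContinuousLinearMap.snd ℝ ℝ ℝ)
      q := by
  simp only [pow_two, two_mul, add_smul]
  exact (hasFDerivAt_fst.mul hasFDerivAt_fst).add (hasFDerivAt_snd.mul hasFDerivAt_snd)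

theorem fderiv_comp_sq_add_sq_apply (hχ : ∀ t, 0 ≤ t → HasDerivAt χ (χ' t) t) (q v : ℝ × ℝ) :
    fderiv ℝ (fun p : ℝ × ℝ => χ (p.1 ^ 2 + p.2 ^ 2)) q v =
      χ' (q.1 ^ 2 + q.2 ^ 2) * (2 * (q.1 * v.1 + q.2 * v.2)) := by
  have hq : HasFDerivAt (fun p : ℝ × ℝ => χ (p.1 ^ 2 + p.2 ^ 2)) _ q :=
    (hχ _ (by positivity)).comp_hasFDerivAt q (hasFDerivAt_sq_add_sq q)
  rw [hq.fderiv]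
  simp only [smul_apply, add_apply,
    ContinuousLinearMap.coe_fst', ContinuousLinearMap.coe_snd', smul_eq_mul]
  ring

theorem fderiv_fderiv_comp_sq_add_sq_apply (hχ : ∀ t, 0 ≤ t → HasDerivAt χ (χ' t) t)
    {χ'' : ℝ} (p v : ℝ × ℝ) (hχ' : HasDerivAt χ' χ'' (p.1 ^ 2 + p.2 ^ 2)) :
    fderiv ℝ (fun q => fderiv ℝ (fun p : ℝ × ℝ => χ (p.1 ^ 2 + p.2 ^ 2)) q v) p v =
      4 * χ'' * (p.1 * v.1 + p.2 * v.2) ^ 2 + 2 * χ' (p.1 ^ 2 + p.2 ^ 2) * (v.1 ^ 2 + v.2 ^ 2) := by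
  simp only [fderiv_comp_sq_add_sq_apply hχ]
  have hlin : HasFDerivAt (fun q : ℝ × ℝ => 2 * (q.1 * v.1 + q.2 * v.2))
      ((2 : ℝ) • (v.1 • ContinuousLinearMap.fst ℝ ℝ ℝ + v.2 • ContinuousLinearMap.snd ℝ ℝ ℝ)) p :=
    ((hasFDerivAt_fst.mul_const v.1).add (hasFDerivAt_snd.mul_const v.2)).const_mul 2
  have hp : HasFDerivAt (fun q : ℝ × ℝ => χ' (q.1 ^ 2 + q.2 ^ 2) * (2 * (q.1 * v.1 + q.2 * v.2)))
      _ p := (hχ'.comp_hasFDerivAt p (hasFDerivAt_sq_add_sq p)).mul hlin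
  rw [hp.fderiv]
  simp only [smul_apply, add_apply,
    ContinuousLinearMap.coe_fst', ContinuousLinearMap.coe_snd', smul_eq_mul, Function.comp_apply]
  ring

theorem laplacian_comp_sq_add_sq (hχ : ∀ t, 0 ≤ t → HasDerivAt χ (χ' t) t) {χ'' : ℝ}
    (p : ℝ × ℝ) (hχ' : HasDerivAt χ' χ'' (p.1 ^ 2 + p.2 ^ 2)) :
    fderiv ℝ (fun q => fderiv ℝ (fun p : ℝ × ℝ => χ (p.1 ^ 2 + p.2 ^ 2)) q (1, 0)) p (1, 0) +
        fderiv ℝ (fun q => fderiv ℝ (fun p : ℝ × ℝ => χ (p.1 ^ 2 + p.2 ^ 2)) q (0, 1)) p (0, 1) =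
      4 * (χ' (p.1 ^ 2 + p.2 ^ 2) + (p.1 ^ 2 + p.2 ^ 2) * χ'') := by
  rw [fderiv_fderiv_comp_sq_add_sq_apply hχ p _ hχ', fderiv_fderiv_comp_sq_add_sq_apply hχ p _ hχ']
  ring

end Radial

/-- The integrand `((ε² + r)^β - ε^{2β}) / r` of `chiReg`, extended by its limit at `r = 0`. -/
def chiIntegrand (β ε : ℝ) : ℝ → ℝ := dslope (fun r => (ε ^ 2 + r) ^ β) 0

section chiReg

variable {β ε t : ℝ}

theorem analyticOnNhd_chiIntegrand (hε : ε ≠ 0) :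
    AnalyticOnNhd ℝ (chiIntegrand β ε) (Ioi (-ε ^ 2)) := by
  have hbase : ∀ s, -ε ^ 2 < s → AnalyticAt ℝ (fun r : ℝ => (ε ^ 2 + r) ^ β) s := fun s hs =>
    (analyticAt_const.add analyticAt_id).rpow_const (by simp; linarith) β
  exact fun t ht => (hbase 0 (neg_lt_zero.2 (by positivity))).dslope (hbase t ht)

theorem chiReg_eq_integral_chiIntegrand (hε : 0 ≤ ε) (t : ℝ) :
    chiReg β ε t = 1 / β * ∫ r in (0 : ℝ)..t, chiIntegrand β ε r := by
  have hε2 : ε ^ (2 * β) = (ε ^ 2 + 0) ^ β := by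
    rw [add_zero, rpow_mul hε, rpow_two]
  unfold chiReg
  congr 1
  refine intervalIntegral.integral_congr_ae ?_
  filter_upwards [Measure.ae_ne volume 0] with r hr _
  rw [chiIntegrand, dslope_of_ne _ hr, slope_def_field, hε2, sub_zero]

theorem hasDerivAt_chiReg (hε : 0 < ε) (ht : -ε ^ 2 < t) :
    HasDerivAt (chiReg β ε) (1 / β * chiIntegrand β ε t) t := by
  have hcont := (analyticOnNhd_chiIntegrand (β := β) hε.ne').continuousOn
  have hderiv := (hcont.hasDerivAt_intervalIntegral isOpen_Ioi
    (mem_Ioi.2 (neg_lt_zero.2 (by positivity))) ht).const_mul (1 / β)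
  simpa only [← funext (chiReg_eq_integral_chiIntegrand (β := β) hε.le)] using hderiv

theorem contDiffOn_chiReg (hε : 0 < ε) : ContDiffOn ℝ 2 (chiReg β ε) (Ioi (-ε ^ 2)) := by
  rw [show (2 : WithTop ℕ∞) = 1 + 1 by norm_num, contDiffOn_succ_iff_deriv_of_isOpen isOpen_Ioi]
  refine ⟨fun s hs => (hasDerivAt_chiReg hε hs).differentiableAt.differentiableWithinAt,
    by simp, ?_⟩
  exact (contDiffOn_const.mul (analyticOnNhd_chiIntegrand hε.ne').contDiffOn_of_completeSpace).congr
    fun s hs => (hasDerivAt_chiReg hε hs).deriv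

theorem chiIntegrand_add_mul_deriv (hε : ε ≠ 0) (ht : -ε ^ 2 < t) :
    chiIntegrand β ε t + t * deriv (chiIntegrand β ε) t = β * (ε ^ 2 + t) ^ (β - 1) := by
  have hbase : HasDerivAt (fun r => (ε ^ 2 + r) ^ β) (β * (ε ^ 2 + t) ^ (β - 1)) t := by
    simpa using
      ((hasDerivAt_id t).const_add (ε ^ 2)).rpow_const (p := β) (Or.inl (by simp; linarith))
  have hprod := (hasDerivAt_id t).mul
    (analyticOnNhd_chiIntegrand (β := β) hε t ht).differentiableAt.hasDerivAt
  have hdslope := hasDerivAt_sub_smul_dslope (a := 0) hbase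
  simp only [sub_zero, smul_eq_mul] at hdslope
  simpa using hprod.unique hdslope

end chiReg

/-- **Laplacian identity for the regularized cone potential** (flat local version of equation
(5)). For `β ∈ (0,1]` and `ε > 0`, the function `u(x,y) = χ_{β,ε}(x² + y²)` is twice
continuously differentiable on `ℝ²` and its Laplacian satisfies
`∂²u/∂x² + ∂²u/∂y² = 4 (ε² + x² + y²)^{β-1}` at every point. -/
theorem chiRad_laplacian (β ε : ℝ) (hβ : β ∈ Set.Ioc (0 : ℝ) 1) (hε : 0 < ε) :
    ContDiff ℝ 2 (chiRad β ε) ∧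
    ∀ p : ℝ × ℝ,
      fderiv ℝ (fun q => fderiv ℝ (chiRad β ε) q ((1 : ℝ), (0 : ℝ))) p ((1 : ℝ), (0 : ℝ)) +
        fderiv ℝ (fun q => fderiv ℝ (chiRad β ε) q ((0 : ℝ), (1 : ℝ))) p ((0 : ℝ), (1 : ℝ)) =
      4 * (ε ^ 2 + p.1 ^ 2 + p.2 ^ 2) ^ (β - 1) := by
  have hpos : ∀ t : ℝ, 0 ≤ t → -ε ^ 2 < t := fun t ht => (neg_lt_zero.2 (pow_pos hε 2)).trans_le ht
  refine ⟨?_, fun p => ?_⟩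
  · rw [← contDiffOn_univ]
    exact (contDiffOn_chiReg hε).comp ((contDiff_fst.pow 2).add (contDiff_snd.pow 2)).contDiffOn
      fun p _ => hpos _ (by positivity)
  · have ht := hpos (p.1 ^ 2 + p.2 ^ 2) (by positivity)
    have hχ' := (analyticOnNhd_chiIntegrand (β := β) hε.ne' _ ht).differentiableAt.hasDerivAt
    refine (laplacian_comp_sq_add_sq (fun s hs => hasDerivAt_chiReg hε (hpos s hs)) p
      (hχ'.const_mul (1 / β))).trans ?_
    rw [add_assoc, ← mul_div_cancel_left₀ ((ε ^ 2 + _) ^ (β - 1)) hβ.1.ne',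
      ← chiIntegrand_add_mul_deriv hε.ne' ht]
    ring
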